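/- Let λ, μ, γ be real numbers with λ + μ + γ ≠ 0, and let M(λ,μ,γ) be the 3×3 real matrix whose rows are (λ,λ,λ), (μ,μ,μ), (γ,γ,γ). Then the evolution algebra E_{M(λ,μ,γ)} is not isomorphic to any of the following six evolution algebras, given by their structure matrices (listed by rows): E₁ = (1,1,0), (−1,−1,0), (0,0,0); E₂ = (1,1,0), (−1,−1,0), (1,1,0); E₃ = (1,1,0), (−1,−1,0), (−1,−1,0); E₁₀ = (0,0,0), (0,0,0), (1,0,0); E₁₁ = (0,0,0), (1,0,0), (1,0,0); E₁₂ = (0,0,0), (1,0,0), (−1,0,0). -/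
import Mathlib


/-- Evolution algebra multiplication on ℝ³ determined by a structure matrix `A`:
`(x ∗_A y) j = ∑ i, x i * y i * A i j`. -/
def evolMul (A : Matrix (Fin 3) (Fin 3) ℝ) (x y : Fin 3 → ℝ) : Fin 3 → ℝ :=
  fun j => ∑ i, x i * y i * A i j

/-- The evolution algebras with structure matrices `A` and `B` are isomorphic:
there is an ℝ-linear equivalence of ℝ³ intertwining the two multiplications. -/
def EvolIso (A B : Matrix (Fin 3) (Fin 3) ℝ) : Prop :=
  ∃ f : (Fin 3 → ℝ) ≃ₗ[ℝ] (Fin 3 → ℝ),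
    ∀ x y, f (evolMul A x y) = evolMul B (f x) (f y)

/-- An isomorphism transports nonzero idempotents. -/
lemma idem_transfer (A B : Matrix (Fin 3) (Fin 3) ℝ) (h : EvolIso A B)
    (u : Fin 3 → ℝ) (hu : u ≠ 0) (hid : evolMul A u u = u) :
    ∃ v : Fin 3 → ℝ, v ≠ 0 ∧ evolMul B v v = v := by
  obtain ⟨f, hf⟩ := h
  refine ⟨f u, ?_, ?_⟩
  · intro h0
    exact hu (f.injective (by simp [h0]))
  · rw [← hf, hid]

theorem stmt (l m g : ℝ) (hsum : l + m + g ≠ 0)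
 :
    ¬ EvolIso (!![l, l, l; m, m, m; g, g, g] : Matrix (Fin 3) (Fin 3) ℝ) (!![1, 1, 0; -1, -1, 0; 0, 0, 0] : Matrix (Fin 3) (Fin 3) ℝ) ∧
    ¬ EvolIso (!![l, l, l; m, m, m; g, g, g] : Matrix (Fin 3) (Fin 3) ℝ) (!![1, 1, 0; -1, -1, 0; 1, 1, 0] : Matrix (Fin 3) (Fin 3) ℝ) ∧
    ¬ EvolIso (!![l, l, l; m, m, m; g, g, g] : Matrix (Fin 3) (Fin 3) ℝ) (!![1, 1, 0; -1, -1, 0; -1, -1, 0] : Matrix (Fin 3) (Fin 3) ℝ) ∧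
    ¬ EvolIso (!![l, l, l; m, m, m; g, g, g] : Matrix (Fin 3) (Fin 3) ℝ) (!![0, 0, 0; 0, 0, 0; 1, 0, 0] : Matrix (Fin 3) (Fin 3) ℝ) ∧
    ¬ EvolIso (!![l, l, l; m, m, m; g, g, g] : Matrix (Fin 3) (Fin 3) ℝ) (!![0, 0, 0; 1, 0, 0; 1, 0, 0] : Matrix (Fin 3) (Fin 3) ℝ) ∧
    ¬ EvolIso (!![l, l, l; m, m, m; g, g, g] : Matrix (Fin 3) (Fin 3) ℝ) (!![0, 0, 0; 1, 0, 0; -1, 0, 0] : Matrix (Fin 3) (Fin 3) ℝ) := by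
  -- The source algebra has a nonzero idempotent `u = (1,1,1)/(l+m+g)`.
  set s := l + m + g with hs
  have hu : (fun _ : Fin 3 => s⁻¹) ≠ (0 : Fin 3 → ℝ) := by
    intro h0
    have := congrFun h0 0
    simp only [Pi.zero_apply, inv_eq_zero] at this
    exact hsum this
  have hid : evolMul (!![l, l, l; m, m, m; g, g, g]) (fun _ => s⁻¹) (fun _ => s⁻¹)
      = (fun _ => s⁻¹) := by
    funext j
    have key : s⁻¹ * s⁻¹ * l + s⁻¹ * s⁻¹ * m + s⁻¹ * s⁻¹ * g = s⁻¹ := by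
      have : s⁻¹ * s⁻¹ * l + s⁻¹ * s⁻¹ * m + s⁻¹ * s⁻¹ * g = s⁻¹ * (s⁻¹ * s) := by
        rw [hs]; ring
      rw [this, inv_mul_cancel₀ hsum, mul_one]
    fin_cases j <;>
      simpa [evolMul, Fin.sum_univ_three, Matrix.cons_val_zero, Matrix.cons_val_one,
        Matrix.head_cons, Matrix.cons_val_two, Matrix.tail_cons] using key
  refine ⟨?_, ?_, ?_, ?_, ?_, ?_⟩ <;> intro h <;>
    obtain ⟨v, hv, hvid⟩ := idem_transfer _ _ h _ hu hid <;>
    have e0 := congrFun hvid 0 <;>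
    have e1 := congrFun hvid 1 <;>
    have e2 := congrFun hvid 2 <;>
    norm_num [evolMul, Fin.sum_univ_three, Matrix.cons_val_zero, Matrix.cons_val_one,
      Matrix.head_cons, Matrix.cons_val_two, Matrix.tail_cons, Matrix.vecHead, Matrix.vecTail] at e0 e1 e2 <;>
    apply hv <;> funext j
  -- E₁, E₂, E₃ : third column zero forces v2 = 0, e0 = e1 forces v0 = v1, hence v0 = 0.
  case refine_1 | refine_2 | refine_3 =>
    have h2 : v 2 = 0 := by linarith
    have h2sq : v 2 * v 2 = 0 := by rw [h2]; ring
    have h01 : v 0 = v 1 := by linarith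
    have hq : v 0 * v 0 - v 1 * v 1 = 0 := by rw [h01]; ring
    have h0 : v 0 = 0 := by linarith
    fin_cases j <;> simp <;> linarith
  -- E₁₀, E₁₁, E₁₂ : e1, e2 force v1 = v2 = 0, hence v0 = 0 from e0.
  case refine_4 | refine_5 | refine_6 =>
    have h1 : v 1 = 0 := by linarith
    have h2 : v 2 = 0 := by linarith
    have h1sq : v 1 * v 1 = 0 := by rw [h1]; ring
    have h2sq : v 2 * v 2 = 0 := by rw [h2]; ring
    have h0 : v 0 = 0 := by linarith
    fin_cases j <;> simp <;> linarith
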